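/- Let α > 0 and λ > 0 be real numbers and set t = √((α + λ - 1)² + 4λ). Then the values Σ = (1 - α - λ + t)/(2λ) and Σ̂ = (-1 + α - λ + t)/2 satisfy the pair of equations Σ = 1/(λ + Σ̂) and Σ̂ = α/(1 + Σ). -/
import Mathlib

/-- Explicit solution of the decoupled (Σ, Σ̂) self-consistent equations for
ridge regression in the high-dimensional limit. -/
theorem ridge_sigma_equations_explicit_solution
    (α lam : ℝ) (hα : 0 < α) (hlam : 0 < lam)
    (t S Sh : ℝ)
    (ht : t = Real.sqrt ((α + lam - 1) ^ 2 + 4 * lam))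
    (hS : S = (1 - α - lam + t) / (2 * lam))
    (hSh : Sh = (-1 + α - lam + t) / 2) :
    S = 1 / (lam + Sh) ∧ Sh = α / (1 + S) := by
  have h4 : (0:ℝ) ≤ (α + lam - 1)^2 + 4*lam := by positivity
  have ht2 : t^2 = (α + lam - 1)^2 + 4*lam := by rw [ht]; exact Real.sq_sqrt h4
  have ht0 : 0 ≤ t := ht ▸ Real.sqrt_nonneg _
  have h1 : 0 < lam + α - 1 + t := by nlinarith [sq_nonneg (t - (1 - α - lam))]
  have h2 : 0 < lam + 1 - α + t := by nlinarith [sq_nonneg (t - (α - lam - 1))]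
  have e1 : lam + Sh = (lam + α - 1 + t) / 2 := by rw [hSh]; ring
  have e2 : 1 + S = (lam + 1 - α + t) / (2 * lam) := by
    rw [hS]; field_simp; ring
  constructor
  · rw [hS, e1, eq_div_iff (by positivity)]
    field_simp
    nlinarith
  · rw [hSh, e2, div_div_eq_mul_div, eq_div_iff (by positivity)]
    field_simp
    nlinarith
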